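/- arXiv:2004.14986 — 2 statements merged into one kernel-verified Lean document; each statement's English description precedes it below -/
import Mathlib

section
/- Let W, Z_1, …, Z_m, X be random variables with finite ranges on a common finite probability space. Assume: (independence) I(W ; (Z_1, …, Z_m)) = 0; (correctness) H(W | (X, Z_q)) = 0 for every q ∈ {1, …, m}; and I(W ; X) = 0. Then H(X) ≥ m·H(W) − ( Σ_{q=1}^{m} H(Z_q) − H(Z_1, …, Z_m) ), where H(Z_1, …, Z_m) denotes the joint entropy. -/
open scoped BigOperators

/-- A finite probability space: a finite sample space `Ω` together with a
probability mass function `p`. -/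
structure FinProbSpace : Type 1 where
  Ω : Type
  fin : Fintype Ω
  p : Ω → ℝ
  nonneg : ∀ ω, 0 ≤ p ω
  sum_one : Finset.sum fin.elems p = 1

namespace FinProbSpace

/-- Probability that the random variable `X` takes the value `s`. -/
noncomputable def prob (μ : FinProbSpace) {S : Type} [DecidableEq S]
    (X : μ.Ω → S) (s : S) : ℝ :=
  letI := μ.fin
  ∑ ω : μ.Ω, if X ω = s then μ.p ω else 0

/-- Shannon entropy of a random variable with finite range. -/
noncomputable def H (μ : FinProbSpace) {S : Type} [Fintype S] [DecidableEq S]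
    (X : μ.Ω → S) : ℝ :=
  ∑ s : S, Real.negMulLog (μ.prob X s)

/-- Conditional Shannon entropy `H(X | Y)`. -/
noncomputable def Hc (μ : FinProbSpace) {S T : Type} [Fintype S] [DecidableEq S]
    [Fintype T] [DecidableEq T] (X : μ.Ω → S) (Y : μ.Ω → T) : ℝ :=
  μ.H (fun ω => (X ω, Y ω)) - μ.H Y

/-- Mutual information `I(X ; Y)`. -/
noncomputable def MI (μ : FinProbSpace) {S T : Type} [Fintype S] [DecidableEq S]
    [Fintype T] [DecidableEq T] (X : μ.Ω → S) (Y : μ.Ω → T) : ℝ :=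
  μ.H X + μ.H Y - μ.H (fun ω => (X ω, Y ω))

/-- Conditional mutual information `I(X ; Y | Z)`. -/
noncomputable def CMI (μ : FinProbSpace) {S T U : Type} [Fintype S] [DecidableEq S]
    [Fintype T] [DecidableEq T] [Fintype U] [DecidableEq U]
    (X : μ.Ω → S) (Y : μ.Ω → T) (Z : μ.Ω → U) : ℝ :=
  μ.H (fun ω => (X ω, Z ω)) + μ.H (fun ω => (Y ω, Z ω))
    - μ.H (fun ω => (X ω, Y ω, Z ω)) - μ.H Z

/-- Independence of two random variables: the joint pmf factorizes. -/
def IndepRV (μ : FinProbSpace) {S T : Type} [DecidableEq S] [DecidableEq T]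
    (X : μ.Ω → S) (Y : μ.Ω → T) : Prop :=
  ∀ s t, μ.prob (fun ω => (X ω, Y ω)) (s, t) = μ.prob X s * μ.prob Y t

end FinProbSpace


namespace FinProbSpace

attribute [local instance] FinProbSpace.fin

variable (μ : FinProbSpace)

lemma prob_nonneg {S : Type} [DecidableEq S] (A : μ.Ω → S) (s : S) :
    0 ≤ μ.prob A s := by
  refine Finset.sum_nonneg fun ω _ => ?_
  split <;> simp [μ.nonneg]

lemma sum_p : ∑ ω : μ.Ω, μ.p ω = 1 := μ.sum_one

lemma sum_prob_mul {S : Type} [Fintype S] [DecidableEq S] (A : μ.Ω → S) (f : S → ℝ) :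
    ∑ s : S, μ.prob A s * f s = ∑ ω : μ.Ω, μ.p ω * f (A ω) := by
  unfold prob
  simp only [Finset.sum_mul, ite_mul, zero_mul]
  rw [Finset.sum_comm]
  refine Finset.sum_congr rfl fun ω _ => ?_
  simp [Finset.sum_ite_eq]

lemma sum_prob {S : Type} [Fintype S] [DecidableEq S] (A : μ.Ω → S) :
    ∑ s : S, μ.prob A s = 1 := by
  have := μ.sum_prob_mul A (fun _ => 1)
  simpa [μ.sum_p] using this

lemma sum_comp_mul {S T : Type} [Fintype S] [DecidableEq S] [Fintype T] [DecidableEq T]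
    (g : S → T) (A : μ.Ω → S) (f : T → ℝ) :
    ∑ t : T, μ.prob (fun ω => g (A ω)) t * f t = ∑ s : S, μ.prob A s * f (g s) := by
  rw [μ.sum_prob_mul (fun ω => g (A ω)) f, μ.sum_prob_mul A (fun s => f (g s))]

lemma sum_prob_fiber {S T : Type} [Fintype S] [DecidableEq S] [DecidableEq T]
    (A : μ.Ω → S) (B : μ.Ω → T) (b : T) :
    ∑ s : S, μ.prob (fun ω => (A ω, B ω)) (s, b) = μ.prob B b := by
  unfold prob
  rw [Finset.sum_comm]
  refine Finset.sum_congr rfl fun ω _ => ?_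
  by_cases hb : B ω = b
  · simp [Prod.ext_iff, hb, Finset.sum_ite_eq]
  · simp [Prod.ext_iff, hb]

lemma prob_le_comp {S T : Type} [DecidableEq S] [DecidableEq T]
    (g : S → T) (A : μ.Ω → S) (s : S) :
    μ.prob A s ≤ μ.prob (fun ω => g (A ω)) (g s) := by
  refine Finset.sum_le_sum fun ω _ => ?_
  by_cases h : A ω = s
  · simp [h]
  · by_cases h2 : g (A ω) = g s <;> simp [h, h2, μ.nonneg]

lemma H_comp_inj {S T : Type} [Fintype S] [DecidableEq S] [Fintype T] [DecidableEq T]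
    (g : S → T) (hg : Function.Injective g) (A : μ.Ω → S) :
    μ.H (fun ω => g (A ω)) = μ.H A := by
  unfold H
  rw [← Finset.sum_subset (Finset.subset_univ (Finset.univ.image g))]
  · rw [Finset.sum_image (fun a _ b _ h => hg h)]
    refine Finset.sum_congr rfl fun s _ => ?_
    congr 1
    unfold prob
    refine Finset.sum_congr rfl fun ω _ => ?_
    simp [hg.eq_iff]
  · intro t _ ht
    have : μ.prob (fun ω => g (A ω)) t = 0 := by
      unfold prob
      refine Finset.sum_eq_zero fun ω _ => ?_
      have : g (A ω) ≠ t := by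
        intro h
        exact ht (Finset.mem_image.2 ⟨A ω, Finset.mem_univ _, h⟩)
      simp [this]
    simp [this]

lemma negMulLog_sum_le {ι : Type*} (s : Finset ι) (f : ι → ℝ) (hf : ∀ i ∈ s, 0 ≤ f i) :
    Real.negMulLog (∑ i ∈ s, f i) ≤ ∑ i ∈ s, Real.negMulLog (f i) := by
  have hS : 0 ≤ ∑ i ∈ s, f i := Finset.sum_nonneg hf
  rw [Real.negMulLog, neg_mul, neg_le, ← Finset.sum_neg_distrib, Finset.sum_mul]
  refine Finset.sum_le_sum fun i hi => ?_
  rcases eq_or_lt_of_le (hf i hi) with h0 | h0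
  · simp [← h0]
  · have hle : f i ≤ ∑ j ∈ s, f j := Finset.single_le_sum hf hi
    have := Real.log_le_log h0 hle
    have := mul_le_mul_of_nonneg_left this (hf i hi)
    simp only [Real.negMulLog, neg_mul, neg_neg]
    linarith

lemma H_snd_le {S T : Type} [Fintype S] [DecidableEq S] [Fintype T] [DecidableEq T]
    (A : μ.Ω → S) (B : μ.Ω → T) :
    μ.H B ≤ μ.H (fun ω => (A ω, B ω)) := by
  unfold H
  rw [Fintype.sum_prod_type_right]
  refine Finset.sum_le_sum fun b _ => ?_
  rw [← μ.sum_prob_fiber A B b]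
  exact negMulLog_sum_le _ _ fun s _ => μ.prob_nonneg _ _

lemma gibbs_pt {x y : ℝ} (hx : 0 ≤ x) (hy : 0 ≤ y) (h : x ≠ 0 → y ≠ 0) :
    x - y ≤ x * Real.log x - x * Real.log y := by
  rcases eq_or_lt_of_le hx with hx0 | hx0
  · simp [← hx0, hy]
  · have hy0 : 0 < y := lt_of_le_of_ne hy (Ne.symm (h hx0.ne'))
    have := Real.log_le_sub_one_of_pos (show 0 < y / x from div_pos hy0 hx0)
    rw [Real.log_div hy0.ne' hx0.ne'] at this
    have h2 := mul_le_mul_of_nonneg_left this hx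
    rw [mul_sub, mul_sub, mul_div_cancel₀ _ hx0.ne', mul_one] at h2
    linarith

lemma H_eq_sum_joint {S T : Type} [Fintype S] [DecidableEq S] [Fintype T] [DecidableEq T]
    (g : S → T) (A : μ.Ω → S) :
    μ.H (fun ω => g (A ω)) = -∑ s : S, μ.prob A s * Real.log (μ.prob (fun ω => g (A ω)) (g s)) := by
  unfold H
  rw [← μ.sum_comp_mul g A (fun t => Real.log (μ.prob (fun ω => g (A ω)) t))]
  simp [Real.negMulLog, neg_mul, ← Finset.sum_neg_distrib]

lemma H_pair_le {S T : Type} [Fintype S] [DecidableEq S] [Fintype T] [DecidableEq T]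
    (A : μ.Ω → S) (B : μ.Ω → T) :
    μ.H (fun ω => (A ω, B ω)) ≤ μ.H A + μ.H B := by
  classical
  set AB : μ.Ω → S × T := fun ω => (A ω, B ω) with hABdef
  set q : S × T → ℝ := fun x => μ.prob A x.1 * μ.prob B x.2 with hqdef
  have hA : μ.H A = -∑ x : S × T, μ.prob AB x * Real.log (μ.prob A x.1) :=
    μ.H_eq_sum_joint Prod.fst AB
  have hB : μ.H B = -∑ x : S × T, μ.prob AB x * Real.log (μ.prob B x.2) :=
    μ.H_eq_sum_joint Prod.snd AB
  have hAB : μ.H AB = -∑ x : S × T, μ.prob AB x * Real.log (μ.prob AB x) :=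
    μ.H_eq_sum_joint id AB
  have hleA : ∀ x : S × T, μ.prob AB x ≤ μ.prob A x.1 :=
    fun x => μ.prob_le_comp Prod.fst AB x
  have hleB : ∀ x : S × T, μ.prob AB x ≤ μ.prob B x.2 :=
    fun x => μ.prob_le_comp Prod.snd AB x
  have key : ∀ x : S × T,
      μ.prob AB x - q x ≤ μ.prob AB x * Real.log (μ.prob AB x) - μ.prob AB x * Real.log (q x) := by
    intro x
    refine gibbs_pt (μ.prob_nonneg _ _) (mul_nonneg (μ.prob_nonneg _ _) (μ.prob_nonneg _ _)) ?_
    intro h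
    have h1 : 0 < μ.prob AB x := lt_of_le_of_ne (μ.prob_nonneg _ _) (Ne.symm h)
    exact (mul_pos (lt_of_lt_of_le h1 (hleA x)) (lt_of_lt_of_le h1 (hleB x))).ne'
  have hsplit : ∑ x : S × T, μ.prob AB x * Real.log (q x)
      = (∑ x : S × T, μ.prob AB x * Real.log (μ.prob A x.1))
        + ∑ x : S × T, μ.prob AB x * Real.log (μ.prob B x.2) := by
    rw [← Finset.sum_add_distrib]
    refine Finset.sum_congr rfl fun x _ => ?_
    rcases eq_or_ne (μ.prob AB x) 0 with h | h
    · simp [h]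
    · have h1 : 0 < μ.prob AB x := lt_of_le_of_ne (μ.prob_nonneg _ _) (Ne.symm h)
      rw [hqdef]
      rw [Real.log_mul (lt_of_lt_of_le h1 (hleA x)).ne' (lt_of_lt_of_le h1 (hleB x)).ne']
      ring
  have hsum := Finset.sum_le_sum (fun x (_ : x ∈ Finset.univ) => key x)
  rw [Finset.sum_sub_distrib, Finset.sum_sub_distrib, hsplit, μ.sum_prob AB] at hsum
  have hq1 : ∑ x : S × T, q x = 1 := by
    rw [Fintype.sum_prod_type, hqdef]
    simp [← Finset.mul_sum, ← Finset.sum_mul, μ.sum_prob]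
  rw [hq1] at hsum
  rw [hA, hB, hAB]
  linarith

lemma H_vec_cond_le {m : ℕ} (hm : 1 ≤ m) {SZ T : Type} [Fintype SZ] [DecidableEq SZ]
    [Fintype T] [DecidableEq T] (Z : Fin m → μ.Ω → SZ) (Y : μ.Ω → T) :
    μ.H (fun ω => ((fun q : Fin m => Z q ω), Y ω)) + ((m : ℝ) - 1) * μ.H Y
      ≤ ∑ q : Fin m, μ.H (fun ω => (Z q ω, Y ω)) := by
  classical
  set J : μ.Ω → (Fin m → SZ) × T := fun ω => ((fun q : Fin m => Z q ω), Y ω) with hJdef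
  have hHq : ∀ q : Fin m, μ.H (fun ω => (Z q ω, Y ω))
      = -∑ x : (Fin m → SZ) × T,
          μ.prob J x * Real.log (μ.prob (fun ω => (Z q ω, Y ω)) (x.1 q, x.2)) := fun q =>
    μ.H_eq_sum_joint (fun x : (Fin m → SZ) × T => (x.1 q, x.2)) J
  have hHY : μ.H Y = -∑ x : (Fin m → SZ) × T, μ.prob J x * Real.log (μ.prob Y x.2) :=
    μ.H_eq_sum_joint Prod.snd J
  have hHJ : μ.H J = -∑ x : (Fin m → SZ) × T, μ.prob J x * Real.log (μ.prob J x) :=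
    μ.H_eq_sum_joint id J
  set Q : (Fin m → SZ) × T → ℝ :=
    fun x => (∏ q : Fin m, μ.prob (fun ω => (Z q ω, Y ω)) (x.1 q, x.2)) / μ.prob Y x.2 ^ (m - 1)
    with hQdef
  have hfib : ∀ (q : Fin m) (y : T), ∑ s : SZ, μ.prob (fun ω => (Z q ω, Y ω)) (s, y) = μ.prob Y y :=
    fun q y => μ.sum_prob_fiber _ _ y
  have hle : ∀ (q : Fin m) (x : (Fin m → SZ) × T),
      μ.prob J x ≤ μ.prob (fun ω => (Z q ω, Y ω)) (x.1 q, x.2) :=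
    fun q x => μ.prob_le_comp (fun x : (Fin m → SZ) × T => (x.1 q, x.2)) J x
  have hleY : ∀ x : (Fin m → SZ) × T, μ.prob J x ≤ μ.prob Y x.2 :=
    fun x => μ.prob_le_comp Prod.snd J x
  have hQnonneg : ∀ x, 0 ≤ Q x := fun x =>
    div_nonneg (Finset.prod_nonneg fun q _ => μ.prob_nonneg _ _)
      (pow_nonneg (μ.prob_nonneg _ _) _)
  have key : ∀ x, μ.prob J x - Q x
      ≤ μ.prob J x * Real.log (μ.prob J x) - μ.prob J x * Real.log (Q x) := by
    intro x
    refine gibbs_pt (μ.prob_nonneg _ _) (hQnonneg x) ?_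
    intro h
    have h1 : 0 < μ.prob J x := lt_of_le_of_ne (μ.prob_nonneg _ _) (Ne.symm h)
    have hnum : 0 < ∏ q : Fin m, μ.prob (fun ω => (Z q ω, Y ω)) (x.1 q, x.2) :=
      Finset.prod_pos fun q _ => lt_of_lt_of_le h1 (hle q x)
    have hden : 0 < μ.prob Y x.2 ^ (m - 1) := pow_pos (lt_of_lt_of_le h1 (hleY x)) _
    exact (div_pos hnum hden).ne'
  have hlogQ : ∀ x, μ.prob J x ≠ 0 → Real.log (Q x)
      = (∑ q : Fin m, Real.log (μ.prob (fun ω => (Z q ω, Y ω)) (x.1 q, x.2)))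
        - ((m : ℝ) - 1) * Real.log (μ.prob Y x.2) := by
    intro x h
    have h1 : 0 < μ.prob J x := lt_of_le_of_ne (μ.prob_nonneg _ _) (Ne.symm h)
    have hne : ∀ q : Fin m, μ.prob (fun ω => (Z q ω, Y ω)) (x.1 q, x.2) ≠ 0 :=
      fun q => (lt_of_lt_of_le h1 (hle q x)).ne'
    have hYne : μ.prob Y x.2 ≠ 0 := (lt_of_lt_of_le h1 (hleY x)).ne'
    rw [hQdef]
    rw [Real.log_div (Finset.prod_ne_zero_iff.2 fun q _ => hne q) (pow_ne_zero _ hYne),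
      Real.log_prod (fun q _ => hne q), Real.log_pow, Nat.cast_sub hm, Nat.cast_one]
  have hQsum : ∑ x : (Fin m → SZ) × T, Q x = 1 := by
    rw [Fintype.sum_prod_type, Finset.sum_comm]
    have hy : ∀ y : T,
        ∑ v : Fin m → SZ, Q (v, y) = μ.prob Y y := by
      intro y
      have hp : ∑ v : Fin m → SZ, ∏ q : Fin m, μ.prob (fun ω => (Z q ω, Y ω)) (v q, y)
          = μ.prob Y y ^ m := by
        have hps := Finset.prod_univ_sum (fun _ : Fin m => (Finset.univ : Finset SZ))
          (fun q s => μ.prob (fun ω => (Z q ω, Y ω)) (s, y))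
        rw [Fintype.piFinset_univ] at hps
        rw [← hps]
        simp [hfib, Finset.prod_const]
      simp only [hQdef]
      rw [← Finset.sum_div, hp]
      rcases eq_or_ne (μ.prob Y y) 0 with h0 | h0
      · rw [h0, zero_pow (by omega : m ≠ 0), zero_div]
      · have hpow : μ.prob Y y ^ m = μ.prob Y y ^ (m - 1) * μ.prob Y y := by
          rw [← pow_succ]
          congr 1
          omega
        rw [hpow, mul_comm, mul_div_assoc, div_self (pow_ne_zero _ h0), mul_one]
    rw [Finset.sum_congr rfl fun y _ => hy y]
    exact μ.sum_prob Y
  have hsum := Finset.sum_le_sum (fun x (_ : x ∈ Finset.univ) => key x)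
  rw [Finset.sum_sub_distrib, Finset.sum_sub_distrib, μ.sum_prob J, hQsum] at hsum
  have hsplit : ∑ x : (Fin m → SZ) × T, μ.prob J x * Real.log (Q x)
      = (∑ q : Fin m, ∑ x : (Fin m → SZ) × T,
          μ.prob J x * Real.log (μ.prob (fun ω => (Z q ω, Y ω)) (x.1 q, x.2)))
        - ((m : ℝ) - 1) * ∑ x : (Fin m → SZ) × T, μ.prob J x * Real.log (μ.prob Y x.2) := by
    have e1 : ∀ x : (Fin m → SZ) × T, μ.prob J x * Real.log (Q x)
        = (∑ q : Fin m, μ.prob J x * Real.log (μ.prob (fun ω => (Z q ω, Y ω)) (x.1 q, x.2)))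
          - ((m : ℝ) - 1) * (μ.prob J x * Real.log (μ.prob Y x.2)) := by
      intro x
      rcases eq_or_ne (μ.prob J x) 0 with h | h
      · simp [h]
      · rw [hlogQ x h, mul_sub, Finset.mul_sum]
        ring
    rw [Finset.sum_congr rfl fun x _ => e1 x, Finset.sum_sub_distrib, ← Finset.mul_sum,
      Finset.sum_comm]
  rw [hsplit] at hsum
  have hfinal : ∑ q : Fin m, μ.H (fun ω => (Z q ω, Y ω))
      = -∑ q : Fin m, ∑ x : (Fin m → SZ) × T,
          μ.prob J x * Real.log (μ.prob (fun ω => (Z q ω, Y ω)) (x.1 q, x.2)) := by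
    rw [← Finset.sum_neg_distrib]
    exact Finset.sum_congr rfl fun q _ => hHq q
  rw [hfinal, hHJ, hHY]
  linarith


end FinProbSpace

open FinProbSpace

/-- **Broadcast-bandwidth converse** (Theorem 1, second inequality). If `W` is
independent of the keys `(Z_1, …, Z_m)`, each qualified receiver can decode,
i.e. `H(W | (X, Z_q)) = 0` for all `q`, and `I(W ; X) = 0`, then
`H(X) ≥ m·H(W) − (Σ_q H(Z_q) − H(Z_1, …, Z_m))`. -/
theorem broadcast_bandwidth_converse
    (μ : FinProbSpace) {m : ℕ} (hm : 1 ≤ m) {SW SZ SX : Type}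
    [Fintype SW] [DecidableEq SW] [Fintype SZ] [DecidableEq SZ]
    [Fintype SX] [DecidableEq SX]
    (W : μ.Ω → SW) (Z : Fin m → μ.Ω → SZ) (X : μ.Ω → SX)
    (hInd : μ.MI W (fun ω => fun q : Fin m => Z q ω) = 0)
    (hCorr : ∀ q : Fin m, μ.Hc W (fun ω => (X ω, Z q ω)) = 0)
    (hSecX : μ.MI W X = 0) :
    μ.H X ≥ m * μ.H W - (∑ q : Fin m, μ.H (Z q) - μ.H (fun ω => fun q : Fin m => Z q ω)) := by
  classical
  simp only [MI] at hInd hSecX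
  simp only [Hc] at hCorr
  -- abbreviations (purely for readability of the proof text)
  -- swap lemma for (X,W)
  have hswapXW : μ.H (fun ω => (X ω, W ω)) = μ.H (fun ω => (W ω, X ω)) :=
    μ.H_comp_inj Prod.swap Prod.swap_injective (fun ω => (W ω, X ω))
  have hXW : μ.H (fun ω => (X ω, W ω)) = μ.H W + μ.H X := by
    rw [hswapXW]; linarith [hSecX]
  -- F1 : H W + H Zv ≤ t
  have hstep1 : μ.H (fun ω => ((fun q : Fin m => Z q ω), (X ω, W ω)))
      = μ.H (fun ω => (X ω, ((fun q : Fin m => Z q ω), W ω))) :=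
    μ.H_comp_inj (fun x : SX × ((Fin m → SZ) × SW) => (x.2.1, (x.1, x.2.2)))
      (fun a b h => by
        simp only [Prod.ext_iff] at h ⊢
        tauto)
      (fun ω => (X ω, ((fun q : Fin m => Z q ω), W ω)))
  have hstep2 : μ.H (fun ω => ((fun q : Fin m => Z q ω), W ω))
      ≤ μ.H (fun ω => (X ω, ((fun q : Fin m => Z q ω), W ω))) :=
    μ.H_snd_le X (fun ω => ((fun q : Fin m => Z q ω), W ω))
  have hstep3 : μ.H (fun ω => ((fun q : Fin m => Z q ω), W ω))
      = μ.H (fun ω => (W ω, fun q : Fin m => Z q ω)) :=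
    μ.H_comp_inj Prod.swap Prod.swap_injective (fun ω => (W ω, fun q : Fin m => Z q ω))
  have hF1 : μ.H W + μ.H (fun ω => fun q : Fin m => Z q ω)
      ≤ μ.H (fun ω => ((fun q : Fin m => Z q ω), (X ω, W ω))) := by
    rw [hstep1]
    have := hstep2
    rw [hstep3] at this
    linarith [hInd]
  -- F2 : key3
  have hF2 : μ.H (fun ω => ((fun q : Fin m => Z q ω), (X ω, W ω)))
      + ((m : ℝ) - 1) * μ.H (fun ω => (X ω, W ω))
      ≤ ∑ q : Fin m, μ.H (fun ω => (Z q ω, (X ω, W ω))) :=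
    μ.H_vec_cond_le hm Z (fun ω => (X ω, W ω))
  -- F3
  have hF3 : ∀ q : Fin m, μ.H (fun ω => (Z q ω, (X ω, W ω))) ≤ μ.H X + μ.H (Z q) := by
    intro q
    have e1 : μ.H (fun ω => (Z q ω, (X ω, W ω))) = μ.H (fun ω => (W ω, (X ω, Z q ω))) :=
      μ.H_comp_inj (fun x : SW × (SX × SZ) => (x.2.2, (x.2.1, x.1)))
        (fun a b h => by
          simp only [Prod.ext_iff] at h ⊢
          tauto)
        (fun ω => (W ω, (X ω, Z q ω)))
    have e2 : μ.H (fun ω => (W ω, (X ω, Z q ω))) = μ.H (fun ω => (X ω, Z q ω)) := by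
      linarith [hCorr q]
    have e3 : μ.H (fun ω => (X ω, Z q ω)) ≤ μ.H X + μ.H (Z q) := μ.H_pair_le X (Z q)
    linarith
  have hF3s : ∑ q : Fin m, μ.H (fun ω => (Z q ω, (X ω, W ω)))
      ≤ ∑ q : Fin m, (μ.H X + μ.H (Z q)) :=
    Finset.sum_le_sum fun q _ => hF3 q
  have hF4 : ∑ q : Fin m, (μ.H X + μ.H (Z q)) = (m : ℝ) * μ.H X + ∑ q : Fin m, μ.H (Z q) := by
    rw [Finset.sum_add_distrib, Finset.sum_const, Finset.card_univ, Fintype.card_fin,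
      nsmul_eq_mul]
  rw [hXW] at hF2
  have hexp : ((m : ℝ) - 1) * (μ.H W + μ.H X)
      = (m : ℝ) * μ.H W + (m : ℝ) * μ.H X - μ.H W - μ.H X := by ring
  rw [hexp] at hF2
  linarith
end

section
/- For every K ≥ 2, every N with 1 ≤ N ≤ K − 1, and every prime power p ≥ K, there exist a finite probability space and random variables on it: W uniformly distributed on F_p; keys Z_1, …, Z_K each taking values in F_p^N; and for every subset Q ⊆ {1, …, K} with |Q| = N a signal X_Q taking values in F_p that is a deterministic function of (W, Z_1, …, Z_K); such that W is independent of (Z_1, …, Z_K), and for every such Q: H(W | (X_Q, Z_q)) = 0 for every q ∈ Q, and I(W ; (X_Q, Z_e)) = 0 for every e ∉ Q. (Hence key storage α = N is achievable at minimum broadcast bandwidth β = 1.) -/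
open scoped BigOperators

open FinProbSpace

open FinProbSpace Finset

section Lemmas

variable {S T : Type} [Fintype S] [DecidableEq S] [Fintype T] [DecidableEq T]

lemma sum_prob_eq_one (μ : FinProbSpace) (X : μ.Ω → S) :
    ∑ s : S, μ.prob X s = 1 := by
  letI := μ.fin
  unfold FinProbSpace.prob
  rw [Finset.sum_comm]
  have : ∀ ω : μ.Ω, (∑ s : S, if X ω = s then μ.p ω else 0) = μ.p ω := by
    intro ω
    rw [Finset.sum_ite_eq, if_pos (Finset.mem_univ _)]
  simp only [this]
  exact μ.sum_one

lemma Hc_eq_zero_of_fun (μ : FinProbSpace) (X : μ.Ω → S) (V : μ.Ω → T)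
    (φ : T → S) (h : ∀ ω, X ω = φ (V ω)) : μ.Hc X V = 0 := by
  letI := μ.fin
  have hpair : μ.H (fun ω => (X ω, V ω)) = μ.H V := by
    unfold FinProbSpace.H
    rw [Fintype.sum_prod_type, Finset.sum_comm]
    refine Finset.sum_congr rfl fun t _ => ?_
    have hprob : ∀ s : S, μ.prob (fun ω => (X ω, V ω)) (s, t)
        = if s = φ t then μ.prob V t else 0 := by
      intro s
      unfold FinProbSpace.prob
      by_cases hs : s = φ t
      · subst hs
        rw [if_pos rfl]
        refine Finset.sum_congr rfl fun ω _ => ?_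
        congr 1
        simp [Prod.ext_iff, h ω]
        intro hv; rw [hv]
      · rw [if_neg hs]
        refine Finset.sum_eq_zero fun ω _ => ?_
        rw [if_neg]
        simp only [Prod.mk.injEq, not_and]
        intro hX hV
        exact hs (by rw [← hX, h ω, hV])
    calc ∑ s : S, Real.negMulLog (μ.prob (fun ω => (X ω, V ω)) (s, t))
        = ∑ s : S, if s = φ t then Real.negMulLog (μ.prob V t) else 0 := by
          refine Finset.sum_congr rfl fun s _ => ?_
          rw [hprob s]
          by_cases hs : s = φ t <;> simp [hs]
      _ = Real.negMulLog (μ.prob V t) := by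
          rw [Finset.sum_ite_eq' Finset.univ (φ t), if_pos (Finset.mem_univ _)]
  unfold FinProbSpace.Hc
  rw [hpair, sub_self]

lemma MI_eq_zero_of_indep (μ : FinProbSpace) (X : μ.Ω → S) (Y : μ.Ω → T)
    (h : μ.IndepRV X Y) : μ.MI X Y = 0 := by
  have hpair : μ.H (fun ω => (X ω, Y ω)) = μ.H X + μ.H Y := by
    unfold FinProbSpace.H
    rw [Fintype.sum_prod_type]
    have : ∀ s t, Real.negMulLog (μ.prob (fun ω => (X ω, Y ω)) (s, t))
        = μ.prob Y t * Real.negMulLog (μ.prob X s)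
          + μ.prob X s * Real.negMulLog (μ.prob Y t) := by
      intro s t; rw [h s t, Real.negMulLog_mul]
    simp only [this]
    rw [Finset.sum_congr rfl (fun s _ => Finset.sum_add_distrib), Finset.sum_add_distrib]
    congr 1
    · rw [Finset.sum_congr rfl (fun s _ => by
        rw [← Finset.sum_mul, sum_prob_eq_one μ Y, one_mul])]
    · rw [Finset.sum_comm]
      rw [Finset.sum_congr rfl (fun t _ => by
        rw [← Finset.sum_mul, sum_prob_eq_one μ X, one_mul])]
  unfold FinProbSpace.MI
  rw [hpair]; ring

end Lemmas

section Unif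
set_option linter.unusedSectionVars false

open Finset

variable (F A : Type) [Fintype F] [Fintype A] [DecidableEq F] [Nonempty F] [Nonempty A]

noncomputable def unif : FinProbSpace where
  Ω := F × A
  fin := inferInstance
  p := fun _ => ((Fintype.card F : ℝ) * Fintype.card A)⁻¹
  nonneg := fun _ => by positivity
  sum_one := by
    have h1 : 0 < Fintype.card F := Fintype.card_pos
    have h2 : 0 < Fintype.card A := Fintype.card_pos
    show (Finset.univ : Finset (F × A)).sum _ = 1
    rw [Finset.sum_const, Finset.card_univ, Fintype.card_prod, nsmul_eq_mul]
    push_cast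
    field_simp

variable {F A}

lemma unif_prob {S : Type} [DecidableEq S] (X : F × A → S) (s : S) :
    (unif F A).prob X s
      = ((Finset.univ.filter fun ω : F × A => X ω = s).card : ℝ)
        * ((Fintype.card F : ℝ) * Fintype.card A)⁻¹ := by
  show (∑ ω : F × A, if X ω = s then ((Fintype.card F : ℝ) * Fintype.card A)⁻¹ else 0) = _
  rw [← Finset.sum_filter, Finset.sum_const, nsmul_eq_mul]

lemma filter_fst_card (w : F) :
    (Finset.univ.filter fun ω : F × A => ω.1 = w).card = Fintype.card A := by
  have : (Finset.univ.filter fun ω : F × A => ω.1 = w) = {w} ×ˢ Finset.univ := by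
    ext ω
    simp only [Finset.mem_filter, Finset.mem_univ, true_and, Finset.mem_product,
      Finset.mem_singleton, and_true]
  rw [this, Finset.card_product, Finset.card_singleton, Finset.card_univ, one_mul]

lemma unif_prob_fst (w : F) :
    (unif F A).prob (Prod.fst : F × A → F) w = ((Fintype.card F : ℝ))⁻¹ := by
  have h1 : (0:ℝ) < Fintype.card F := by exact_mod_cast (Fintype.card_pos : 0 < Fintype.card F)
  have h2 : (0:ℝ) < Fintype.card A := by exact_mod_cast (Fintype.card_pos : 0 < Fintype.card A)
  rw [unif_prob, filter_fst_card]
  field_simp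

lemma unif_indep_fst {T : Type} [DecidableEq T] (h : F → A → T)
    (hc : ∀ (w w' : F) (t : T),
      (Finset.univ.filter fun a => h w a = t).card
        = (Finset.univ.filter fun a => h w' a = t).card) :
    (unif F A).IndepRV (Prod.fst : F × A → F) (fun ω => h ω.1 ω.2) := by
  intro w t
  have h1 : (0:ℝ) < Fintype.card F := by exact_mod_cast (Fintype.card_pos : 0 < Fintype.card F)
  have h2 : (0:ℝ) < Fintype.card A := by exact_mod_cast (Fintype.card_pos : 0 < Fintype.card A)
  erw [unif_prob, unif_prob, unif_prob]
  have e1 : (Finset.univ.filter fun ω : F × A => (ω.1, h ω.1 ω.2) = (w, t)).card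
      = (Finset.univ.filter fun a => h w a = t).card := by
    have : (Finset.univ.filter fun ω : F × A => (ω.1, h ω.1 ω.2) = (w, t))
        = {w} ×ˢ (Finset.univ.filter fun a => h w a = t) := by
      ext ω
      simp only [Finset.mem_filter, Finset.mem_univ, true_and, Prod.mk.injEq,
        Finset.mem_product, Finset.mem_singleton]
      constructor
      · rintro ⟨h1', h2'⟩; subst h1'; exact ⟨rfl, h2'⟩
      · rintro ⟨h1', h2'⟩; subst h1'; exact ⟨rfl, h2'⟩
    rw [this, Finset.card_product, Finset.card_singleton, one_mul]
  have e2 : (Finset.univ.filter fun ω : F × A => h ω.1 ω.2 = t).card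
      = Fintype.card F * (Finset.univ.filter fun a => h w a = t).card := by
    rw [Finset.card_filter, Fintype.sum_prod_type]
    have : ∀ w' : F, (∑ a : A, if h w' a = t then 1 else 0)
        = (Finset.univ.filter fun a => h w a = t).card := by
      intro w'
      rw [← Finset.card_filter]
      exact hc w' w t
    simp only [this]
    rw [Finset.sum_const, Finset.card_univ, smul_eq_mul]
  rw [e1, filter_fst_card, e2]
  push_cast
  field_simp

end Unif

section Poly

open Polynomial Finset

variable {F : Type} [Field F]

lemma card_fiber_of_bijective {α β : Type} [Fintype α] [DecidableEq β] {L : α → β}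
    (hL : Function.Bijective L) (v : β) :
    (Finset.univ.filter fun a => L a = v).card = 1 := by
  classical
  let e := Equiv.ofBijective L hL
  have : (Finset.univ.filter fun a => L a = v) = {e.symm v} := by
    ext a
    simp only [Finset.mem_filter, Finset.mem_univ, true_and, Finset.mem_singleton]
    rw [Equiv.eq_symm_apply]
    exact Iff.rfl
  rw [this, Finset.card_singleton]

lemma aux_key (N : ℕ) (P' : F[X]) (hP' : P'.natDegree < N) (c : F) (a : Fin (N+1) → F) :
    ∑ i : Fin (N+1), ((Polynomial.X + Polynomial.C c) * P').coeff (i : ℕ) * a i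
      = ∑ j : Fin N, P'.coeff (j : ℕ) * (c * a j.castSucc + a j.succ) := by
  have hcoeff : ∀ i : ℕ, ((Polynomial.X + Polynomial.C c) * P').coeff i
      = (Polynomial.X * P').coeff i + c * P'.coeff i := by
    intro i
    rw [add_mul, Polynomial.coeff_add, Polynomial.coeff_C_mul]
  have hterm : ∀ i : Fin (N+1), ((Polynomial.X + Polynomial.C c) * P').coeff (i : ℕ) * a i
      = (Polynomial.X * P').coeff (i : ℕ) * a i + c * P'.coeff (i : ℕ) * a i := by
    intro i; rw [hcoeff]; ring
  simp only [hterm]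
  rw [Finset.sum_add_distrib]
  have e1 : ∑ i : Fin (N+1), (Polynomial.X * P').coeff (i : ℕ) * a i
      = ∑ j : Fin N, P'.coeff (j : ℕ) * a j.succ := by
    rw [Fin.sum_univ_succ]
    have h0 : (Polynomial.X * P').coeff ((0 : Fin (N+1)) : ℕ) = 0 := by
      rw [Fin.val_zero, Polynomial.mul_coeff_zero, Polynomial.coeff_X_zero, zero_mul]
    rw [h0, zero_mul, zero_add]
    refine Finset.sum_congr rfl fun j _ => ?_
    rw [Fin.val_succ, Polynomial.coeff_X_mul]
  have e2 : ∑ i : Fin (N+1), c * P'.coeff (i : ℕ) * a i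
      = ∑ j : Fin N, c * P'.coeff (j : ℕ) * a j.castSucc := by
    rw [Fin.sum_univ_castSucc]
    have hN : P'.coeff (((Fin.last N) : Fin (N+1)) : ℕ) = 0 := by
      rw [Fin.val_last]
      exact Polynomial.coeff_eq_zero_of_natDegree_lt hP'
    rw [hN, mul_zero, zero_mul, add_zero]
    refine Finset.sum_congr rfl fun j _ => ?_
    rw [Fin.coe_castSucc]
  rw [e1, e2, ← Finset.sum_add_distrib]
  refine Finset.sum_congr rfl fun j _ => ?_
  ring

lemma aux_inj (N : ℕ) (P : F[X]) (hP : P.natDegree < N + 1) (e : F)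
    (he : P.eval (-e) ≠ 0) :
    Function.Injective (fun a : Fin (N+1) → F =>
      ((∑ i : Fin (N+1), P.coeff (i : ℕ) * a i),
        (fun j : Fin N => e * a j.castSucc + a j.succ))) := by
  intro a b hab
  have h1 : ∑ i : Fin (N+1), P.coeff (i : ℕ) * a i
      = ∑ i : Fin (N+1), P.coeff (i : ℕ) * b i := congrArg Prod.fst hab
  have h2 : ∀ j : Fin N, e * a j.castSucc + a j.succ = e * b j.castSucc + b j.succ :=
    fun j => congrFun (congrArg Prod.snd hab) j
  set d : Fin (N+1) → F := fun i => a i - b i with hd_def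
  have hd : ∀ j : Fin N, d j.succ = -e * d j.castSucc := by
    intro j
    have := h2 j
    simp only [hd_def]
    ring_nf
    linear_combination this
  have hdi : ∀ m : ℕ, ∀ h : m < N + 1, d ⟨m, h⟩ = (-e) ^ m * d 0 := by
    intro m
    induction m with
    | zero => intro h; simp
    | succ m ih =>
      intro h
      have hm : m < N := Nat.lt_of_succ_lt_succ h
      have hj1 : (⟨m + 1, h⟩ : Fin (N+1)) = (⟨m, hm⟩ : Fin N).succ := rfl
      have hj2 : ((⟨m, hm⟩ : Fin N).castSucc : Fin (N+1)) = ⟨m, Nat.lt_succ_of_lt hm⟩ := rfl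
      rw [hj1, hd, hj2, ih (Nat.lt_succ_of_lt hm), pow_succ]
      ring
  have hsum : ∑ i : Fin (N+1), P.coeff (i : ℕ) * d i = 0 := by
    simp only [hd_def, mul_sub]
    rw [Finset.sum_sub_distrib, h1, sub_self]
  have heval : ∑ i : Fin (N+1), P.coeff (i : ℕ) * (-e) ^ (i : ℕ) = P.eval (-e) := by
    rw [Fin.sum_univ_eq_sum_range (fun i => P.coeff i * (-e) ^ i) (N+1)]
    exact (Polynomial.eval_eq_sum_range' hP (-e)).symm
  have hd0 : d 0 = 0 := by
    have : P.eval (-e) * d 0 = 0 := by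
      rw [← heval, Finset.sum_mul, ← hsum]
      refine Finset.sum_congr rfl fun i _ => ?_
      have : d i = (-e) ^ (i : ℕ) * d 0 := by
        have := hdi (i : ℕ) i.isLt
        simpa using this
      rw [this]; ring
    exact (mul_eq_zero.mp this).resolve_left he
  funext i
  have : d i = 0 := by
    have := hdi (i : ℕ) i.isLt
    simp only [Fin.eta] at this
    rw [this, hd0, mul_zero]
  have := sub_eq_zero.mp this
  exact this

end Poly

/-- **Achievability part of Theorem 2** (Matsumoto–Imai key assignment): key
storage α = N is achievable at minimum broadcast bandwidth β = 1. For every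
`K ≥ 2`, every `1 ≤ N ≤ K − 1`, and every finite field `F` with at least `K`
elements (i.e. every prime power `p ≥ K`), there are a finite probability
space, a message `W` uniform on `F`, keys `Z_k` with values in `F^N`
independent of `W`, and for every size-`N` set `Q` of receivers a broadcast
signal `X_Q ∈ F` that is a deterministic function of `(W, Z_1, …, Z_K)`,
such that correctness and security hold for every such `Q`. -/
theorem achievability_min_bandwidth
    (K N : ℕ) (hK : 2 ≤ K) (hN1 : 1 ≤ N) (hNK : N ≤ K - 1)
    (F : Type) [Field F] [Fintype F] [DecidableEq F] (hF : K ≤ Fintype.card F) :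
    ∃ (μ : FinProbSpace) (W : μ.Ω → F) (Z : Fin K → μ.Ω → (Fin N → F))
      (X : Finset (Fin K) → μ.Ω → F),
      (∀ w : F, μ.prob W w = 1 / (Fintype.card F : ℝ))
      ∧ μ.IndepRV W (fun ω => fun k : Fin K => Z k ω)
      ∧ (∀ Q : Finset (Fin K), Q.card = N →
          (∃ f : F × (Fin K → Fin N → F) → F,
            ∀ ω, X Q ω = f (W ω, fun k : Fin K => Z k ω))
          ∧ (∀ q ∈ Q, μ.Hc W (fun ω => (X Q ω, Z q ω)) = 0)
          ∧ (∀ e ∉ Q, μ.MI W (fun ω => (X Q ω, Z e ω)) = 0)) := by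
  classical
  -- an injective labelling of the K receivers by field elements
  obtain ⟨lam, hlam⟩ : ∃ lam : Fin K → F, Function.Injective lam := by
    refine ⟨fun k => (Fintype.equivFin F).symm (Fin.castLE hF k), ?_⟩
    intro i j hij
    have := (Fintype.equivFin F).symm.injective hij
    exact Fin.castLE_injective hF this
  set A : Type := Fin (N+1) → F with hA
  -- the polynomials
  set PP : Finset (Fin K) → Polynomial F :=
    fun s => ∏ q ∈ s, (Polynomial.X + Polynomial.C (lam q)) with hPP
  have hPPdeg : ∀ s : Finset (Fin K), (PP s).natDegree = s.card := by
    intro s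
    rw [hPP]
    rw [Polynomial.natDegree_prod _ _ (fun q _ => Polynomial.X_add_C_ne_zero (lam q))]
    simp [Polynomial.natDegree_X_add_C]
  set μ : FinProbSpace := unif F A with hμ
  set W : μ.Ω → F := Prod.fst with hW
  set Z : Fin K → μ.Ω → (Fin N → F) :=
    fun k ω j => lam k * ω.2 j.castSucc + ω.2 j.succ with hZ
  set KY : Finset (Fin K) → μ.Ω → F :=
    fun Q ω => ∑ i : Fin (N+1), (PP Q).coeff (i : ℕ) * ω.2 i with hKY
  set X : Finset (Fin K) → μ.Ω → F := fun Q ω => ω.1 + KY Q ω with hX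
  -- key correctness identity
  have hkey : ∀ (Q : Finset (Fin K)), Q.card = N → ∀ q ∈ Q, ∀ ω : μ.Ω,
      KY Q ω = ∑ j : Fin N, (PP (Q.erase q)).coeff (j : ℕ) * Z q ω j := by
    intro Q hQ q hq ω
    have hfac : PP Q = (Polynomial.X + Polynomial.C (lam q)) * PP (Q.erase q) := by
      rw [hPP]
      exact (Finset.mul_prod_erase Q _ hq).symm
    have hdeg : (PP (Q.erase q)).natDegree < N := by
      rw [hPPdeg, Finset.card_erase_of_mem hq, hQ]
      omega
    rw [hKY]
    simp only [hfac]
    exact aux_key N (PP (Q.erase q)) hdeg (lam q) ω.2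
  refine ⟨μ, W, Z, X, ?_, ?_, ?_⟩
  · -- uniformity of W
    intro w
    rw [hW, unif_prob_fst, one_div]
  · -- independence of W and keys
    exact unif_indep_fst (F := F) (A := A) (T := Fin K → Fin N → F)
      (fun w a => fun k j => lam k * a j.castSucc + a j.succ)
      (fun w w' t => rfl)
  · intro Q hQ
    have hQne : Q.Nonempty := Finset.card_pos.mp (by omega)
    refine ⟨?_, ?_, ?_⟩
    · -- X Q is a deterministic function of (W, Z)
      obtain ⟨q0, hq0⟩ := hQne
      refine ⟨fun wz => wz.1 + ∑ j : Fin N, (PP (Q.erase q0)).coeff (j : ℕ) * wz.2 q0 j, ?_⟩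
      intro ω
      rw [hX]
      simp only
      rw [hkey Q hQ q0 hq0 ω]
    · -- correctness: H(W | X_Q, Z_q) = 0
      intro q hq
      refine Hc_eq_zero_of_fun μ W (fun ω => (X Q ω, Z q ω))
        (fun xz => xz.1 - ∑ j : Fin N, (PP (Q.erase q)).coeff (j : ℕ) * xz.2 j) ?_
      intro ω
      simp only
      rw [← hkey Q hQ q hq ω, hX, hW]
      simp only
      ring
    · -- security: I(W ; X_Q, Z_e) = 0
      intro e he
      refine MI_eq_zero_of_indep μ W (fun ω => (X Q ω, Z e ω)) ?_
      have hbij : Function.Bijective (fun a : A =>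
          ((∑ i : Fin (N+1), (PP Q).coeff (i : ℕ) * a i),
            (fun j : Fin N => lam e * a j.castSucc + a j.succ))) := by
        rw [Fintype.bijective_iff_injective_and_card]
        constructor
        · refine aux_inj N (PP Q) ?_ (lam e) ?_
          · rw [hPPdeg, hQ]; omega
          · rw [hPP, Polynomial.eval_prod]
            refine Finset.prod_ne_zero_iff.mpr fun q hq => ?_
            simp only [Polynomial.eval_add, Polynomial.eval_X, Polynomial.eval_C]
            intro hcontra
            have : lam q = lam e := by linear_combination hcontra
            exact he (hlam this ▸ hq)
        · simp only [hA]
          rw [Fintype.card_prod, Fintype.card_fun, Fintype.card_fun,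
            Fintype.card_fin, Fintype.card_fin, pow_succ]
          ring
      have hfib : ∀ (w : F) (t : F × (Fin N → F)),
          (Finset.univ.filter fun a : A =>
            ((w + ∑ i : Fin (N+1), (PP Q).coeff (i : ℕ) * a i,
              fun j : Fin N => lam e * a j.castSucc + a j.succ) : F × (Fin N → F)) = t).card
          = 1 := by
        intro w t
        obtain ⟨t1, t2⟩ := t
        have : (Finset.univ.filter fun a : A =>
            ((w + ∑ i : Fin (N+1), (PP Q).coeff (i : ℕ) * a i,
              fun j : Fin N => lam e * a j.castSucc + a j.succ) : F × (Fin N → F)) = (t1, t2))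
            = (Finset.univ.filter fun a : A =>
              ((∑ i : Fin (N+1), (PP Q).coeff (i : ℕ) * a i,
                fun j : Fin N => lam e * a j.castSucc + a j.succ) : F × (Fin N → F))
                = (t1 - w, t2)) := by
          ext a
          simp only [Finset.mem_filter, Finset.mem_univ, true_and, Prod.mk.injEq]
          constructor
          · rintro ⟨h1, h2⟩; exact ⟨by linear_combination h1, h2⟩
          · rintro ⟨h1, h2⟩; exact ⟨by linear_combination h1, h2⟩
        rw [this]
        exact card_fiber_of_bijective hbij (t1 - w, t2)
      exact unif_indep_fst (F := F) (A := A)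
        (fun w a => ((w + ∑ i : Fin (N+1), (PP Q).coeff (i : ℕ) * a i,
          fun j : Fin N => lam e * a j.castSucc + a j.succ) : F × (Fin N → F)))
        (fun w w' t => by rw [hfib w t, hfib w' t])
end
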